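/- arXiv:2508.03930 — 4 statements merged into one kernel-verified Lean document; each statement's English description precedes it below -/
import Mathlib

section
/- Let U^2 be a special square generated by a layer of a pyramid P(F,F') of runs with period p. Define i as the smallest position of U^2 with per(U^2[0..i]) > p and j as the largest position with per(U^2[j..|U^2|)) > p. Then j < |U| ≤ i, and the triple (i - j - 1, U^2[i-p..i-1], U^2[j+1..j+p]) equals the type (|F ∩ F'|, last p characters of F, first p characters of F') of the pyramid. Consequently, the sets of special squares generated by two pyramids of different types are disjoint. -/
open List

variable {α : Type*}

/-- `frag T a b` is the fragment `T[a..b]` (inclusive, 0-based). -/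
def frag (T : List α) (a b : ℕ) : List α := (T.drop a).take (b + 1 - a)

/-- `p` is a period of `S`: `0 < p ≤ |S|` and `S[i] = S[i+p]` for all valid `i`. -/
def IsPeriodOf (p : ℕ) (S : List α) : Prop :=
  0 < p ∧ p ≤ S.length ∧ ∀ i : ℕ, i + p < S.length → S[i]? = S[i + p]?

/-- The smallest period of `S`. -/
noncomputable def minPeriod (S : List α) : ℕ := sInf {p | IsPeriodOf p S}

/-- `T[a..b]` is a run: periodic (its smallest period occurs at least twice)
and maximal on both sides. -/
def IsRun (T : List α) (a b : ℕ) : Prop :=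
  a ≤ b ∧ b < T.length ∧
  2 * minPeriod (frag T a b) ≤ b + 1 - a ∧
  (a = 0 ∨ T[a - 1]? ≠ T[a - 1 + minPeriod (frag T a b)]?) ∧
  (b = T.length - 1 ∨ T[b + 1]? ≠ T[b + 1 - minPeriod (frag T a b)]?)

/-- `W` occurs in `T` at position `s`. -/
def OccursAt (T : List α) (s : ℕ) (W : List α) : Prop :=
  s + W.length ≤ T.length ∧ (T.drop s).take W.length = W

/-- The set of distinct square substrings of `T`. -/
def Squares (T : List α) : Set (List α) :=
  {W | ∃ X : List α, X ≠ [] ∧ W = X ++ X ∧ W <:+: T}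

/-- A non-empty string is primitive if it is not a proper power. -/
def Primitive (U : List α) : Prop :=
  U ≠ [] ∧ ∀ (V : List α) (k : ℕ), U = (List.replicate k V).flatten → k = 1

/-- Cyclic rotation moving the first `c` characters to the end. -/
def rot (c : ℕ) (L : List α) : List α := L.drop c ++ L.take c

/-- `lam` is the Lyndon root of a periodic string `S`: the lexicographically
smallest rotation of `S[0..per(S))`. -/
def LyndonRootOf [LinearOrder α] (S lam : List α) : Prop :=
  (∃ c < minPeriod S, lam = rot c (S.take (minPeriod S))) ∧
  ∀ c < minPeriod S, lam ≤ rot c (S.take (minPeriod S))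

/-- Squares generated by a periodic string `U`: squares contained in `U`
whose smallest period equals that of `U`. -/
def FragSquares (U : List α) : Set (List α) :=
  {W | ∃ X : List α, X ≠ [] ∧ W = X ++ X ∧ W <:+: U ∧ minPeriod W = minPeriod U}

/-- `subper U`: the minimum of `per(X)` over squares `X²` generated by `U`. -/
noncomputable def subper (U : List α) : ℕ :=
  sInf {q | ∃ X : List α, X ≠ [] ∧ (X ++ X) <:+: U ∧
    minPeriod (X ++ X) = minPeriod U ∧ minPeriod X = q}

/-- Fragments `[a..b]` and `[a'..b']` are neighboring:
`[a-1..b+1] ∩ [a'..b'] ≠ ∅`. -/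
def Neighboring (a b a' b' : ℕ) : Prop := a ≤ b' + 1 ∧ a' ≤ b + 1

/-- `T[x..y]` is a layer of the pyramid of the neighboring runs
`F = T[a..b]` and `F' = T[a'..b']` (with `a < a'`): a subperiodic run `R`
with `subper(R) = per(F)` such that `R ∩ (F ∪ F')` is periodic with
period `per(R)`. -/
def IsLayer (T : List α) (a b a' b' x y : ℕ) : Prop :=
  IsRun T x y ∧
  4 * subper (frag T x y) ≤ minPeriod (frag T x y) ∧
  subper (frag T x y) = minPeriod (frag T a b) ∧
  2 * minPeriod (frag T x y) ≤ min y b' + 1 - max x a ∧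
  IsPeriodOf (minPeriod (frag T x y)) (frag T (max x a) (min y b'))

/-- A `τ`-synchronizing set of `T` (Kempa–Kociumaka): consistency and density. -/
def SyncSet (T : List α) (τ : ℕ) (S : Set ℕ) : Prop :=
  (∀ i ∈ S, i + 2 * τ ≤ T.length) ∧
  (∀ i j : ℕ, i + 2 * τ ≤ T.length → j + 2 * τ ≤ T.length →
    (T.drop i).take (2 * τ) = (T.drop j).take (2 * τ) → (i ∈ S ↔ j ∈ S)) ∧
  (∀ i : ℕ, i + 3 * τ - 1 ≤ T.length →
    ((∀ k ∈ S, k < i ∨ i + τ ≤ k) ↔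
      3 * minPeriod ((T.drop i).take (3 * τ - 1)) ≤ τ))

/-! The smallest period of the layer is already fixed by the long subwindow containing `U²`
(weak Fine–Wilf), so it equals `per(U²) = |U|` and `4p ≤ |U|`. The occurrence `T[s..s+2|U|)` of
`U²` cannot lie inside `F` or `F'`, since it would then have period `p`. If its middle `s + |U|`
were outside `[a', b + 1]`, one half of `U²` would lie in `F` or `F'` and be `p`-periodic, and by
`|U|`-periodicity so would the other half, which contains both boundary mismatches
`T[b+1] ≠ T[b+1-p]` and `T[a'-1] ≠ T[a'-1+p]`. So the prefixes of `U²` keep period `p`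
exactly up to position `b - s` and the suffixes exactly from `a' - s`, which reads off the type. -/

/-- Periodicity read in place in `T`, with no side conditions on `p` (compare `IsPeriodOf` on
`frag T l r`). -/
def PeriodicOn (T : List α) (p l r : ℕ) : Prop :=
  ∀ t, l ≤ t → t + p ≤ r → T[t]? = T[t + p]?

namespace PeriodicOn

variable {T : List α} {n p q l r : ℕ}

theorem mono (h : PeriodicOn T p l r) {l' r' : ℕ} (hl : l ≤ l') (hr : r' ≤ r) :
    PeriodicOn T p l' r' :=
  fun t ht htr => h t (hl.trans ht) (htr.trans hr)

theorem getElem?_add_mul (h : PeriodicOn T p l r) (k : ℕ) {t : ℕ} (ht : l ≤ t)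
    (htr : t + k * p ≤ r) : T[t]? = T[t + k * p]? := by
  induction k generalizing t with
  | zero => simp
  | succ k ih =>
    rw [Nat.succ_mul] at htr ⊢
    rw [h t ht (by omega), ih (by omega) (by omega), Nat.add_right_comm, Nat.add_assoc]

theorem getElem?_eq_of_modEq (h : PeriodicOn T p l r) {t t' : ℕ} (ht : l ≤ t) (ht' : l ≤ t')
    (htr : t ≤ r) (ht'r : t' ≤ r) (hmod : t ≡ t' [MOD p]) : T[t]? = T[t']? := by
  wlog htt' : t ≤ t' generalizing t t'
  · exact (this ht' ht ht'r htr hmod.symm (by omega)).symm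
  obtain ⟨k, hk⟩ := (Nat.modEq_iff_exists_eq_add htt').mp hmod
  subst hk
  rw [mul_comm] at ht'r ⊢
  exact h.getElem?_add_mul k ht ht'r

theorem sub (hq : PeriodicOn T q l r) (hp : PeriodicOn T p l r) (hqp : q ≤ p)
    (hlen : l + p + q ≤ r + 1) : PeriodicOn T (p - q) l r := by
  intro t ht htr
  rcases Nat.lt_or_ge t (l + q) with htq | htq
  · rw [hp t ht (by omega), hq (t + (p - q)) (by omega) (by omega), Nat.add_assoc,
      Nat.sub_add_cancel hqp]
  · have h₁ := hq (t - q) (by omega) (by omega)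
    have h₂ := hp (t - q) (by omega) (by omega)
    rw [Nat.sub_add_cancel (by omega)] at h₁
    rw [← h₁, h₂, show t - q + p = t + (p - q) by omega]

/-- Weak form of the Fine–Wilf periodicity lemma. -/
theorem gcd {p q : ℕ} (hp : PeriodicOn T p l r) (hq : PeriodicOn T q l r)
    (hlen : l + p + q ≤ r + 1) : PeriodicOn T (Nat.gcd p q) l r := by
  rcases Nat.eq_zero_or_pos p with rfl | hp0
  · simpa using hq
  rcases Nat.eq_zero_or_pos q with rfl | hq0
  · simpa using hp
  rcases le_total p q with hpq | hqp
  · have h := hp.gcd (hp.sub hq hpq (by omega)) (by omega)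
    rwa [Nat.gcd_sub_self_right hpq] at h
  · have h := (hq.sub hp hqp (by omega)).gcd hq (by omega)
    rwa [Nat.gcd_sub_self_left hqp] at h
termination_by p + q

theorem shift_left (hn : PeriodicOn T n l (r + n)) (hp : PeriodicOn T p (l + n) (r + n)) :
    PeriodicOn T p l r := by
  intro t ht htr
  rw [hn t ht (by omega), hp (t + n) (by omega) (by omega), hn (t + p) (by omega) (by omega),
    Nat.add_right_comm]

theorem shift_right (hn : PeriodicOn T n l (r + n)) (hp : PeriodicOn T p l r) :
    PeriodicOn T p (l + n) (r + n) := by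
  intro t ht htr
  obtain ⟨u, rfl⟩ : ∃ u, t = u + n := ⟨t - n, by omega⟩
  rw [← hn u (by omega) (by omega), hp u (by omega) (by omega), hn (u + p) (by omega) (by omega),
    Nat.add_right_comm]

theorem of_subwindow {P N x y A B : ℕ} (hP : PeriodicOn T P x y) (hN : PeriodicOn T N A B)
    (hxA : x ≤ A) (hBy : B ≤ y) (hP0 : 0 < P) (hlen : A + P + N ≤ B + 1) :
    PeriodicOn T N x y := by
  intro t ht hty
  -- `t'` is the representative of `t` mod `P` among the first `P` positions of `[A..B]`.
  have hPA : A ≤ P * A := Nat.le_mul_of_pos_left A hP0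
  set t' := A + (t + P * A - A) % P
  have ht'P : t' < A + P := by have := Nat.mod_lt (t + P * A - A) hP0; omega
  have hmod : t' ≡ t [MOD P] :=
    calc t' ≡ A + (t + P * A - A) [MOD P] := (Nat.mod_modEq _ _).add_left A
      _ = t + P * A := by omega
      _ ≡ t [MOD P] := Nat.add_mul_mod_self_left t P A
  rw [hP.getElem?_eq_of_modEq ht (by omega) (by omega) (by omega) hmod.symm,
    hN t' (by omega) (by omega),
    hP.getElem?_eq_of_modEq (by omega) (by omega) (by omega) hty (hmod.add_right N)]

end PeriodicOn

section MinPeriod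

variable {S T : List α} {p q l r : ℕ}

theorem isPeriodOf_length (hS : S ≠ []) : IsPeriodOf S.length S :=
  ⟨length_pos_iff.2 hS, le_rfl, fun _ h => absurd h (by omega)⟩

theorem minPeriod_isPeriodOf (hS : S ≠ []) : IsPeriodOf (minPeriod S) S :=
  Nat.sInf_mem (s := {p | IsPeriodOf p S}) ⟨S.length, isPeriodOf_length hS⟩

theorem minPeriod_le (h : IsPeriodOf q S) : minPeriod S ≤ q :=
  Nat.sInf_le h

theorem minPeriod_pos (hS : S ≠ []) : 0 < minPeriod S :=
  (minPeriod_isPeriodOf hS).1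

theorem IsPeriodOf.periodicOn (h : IsPeriodOf q S) : PeriodicOn S q 0 (S.length - 1) :=
  fun t _ ht => h.2.2 t (by have := h.1; omega)

theorem length_frag (hr : r < T.length) : (frag T l r).length = r + 1 - l := by
  simp only [frag, length_take, length_drop]
  omega

theorem getElem?_frag {i : ℕ} (hi : i < r + 1 - l) : (frag T l r)[i]? = T[l + i]? := by
  rw [frag, getElem?_take_of_lt hi, getElem?_drop]

theorem frag_ne_nil (hlr : l ≤ r) (hr : r < T.length) : frag T l r ≠ [] := by
  rw [← length_pos_iff, length_frag hr]
  omega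

theorem isPeriodOf_frag_iff (hr : r < T.length) :
    IsPeriodOf p (frag T l r) ↔ 0 < p ∧ p ≤ r + 1 - l ∧ PeriodicOn T p l r := by
  rw [IsPeriodOf, length_frag hr]
  refine and_congr_right fun _ => and_congr_right fun _ =>
    ⟨fun h t ht htr => ?_, fun h i hi => ?_⟩
  · have := h (t - l) (by omega)
    rwa [getElem?_frag (by omega), getElem?_frag (by omega), Nat.add_sub_cancel' ht,
      ← Nat.add_assoc, Nat.add_sub_cancel' ht] at this
  · rw [getElem?_frag (by omega), getElem?_frag (by omega), ← Nat.add_assoc]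
    exact h (l + i) (by omega) (by omega)

theorem periodicOn_minPeriod_frag (hlr : l ≤ r) (hr : r < T.length) :
    PeriodicOn T (minPeriod (frag T l r)) l r :=
  ((isPeriodOf_frag_iff hr).1 (minPeriod_isPeriodOf (frag_ne_nil hlr hr))).2.2

theorem minPeriod_frag_le (hlr : l ≤ r) (hr : r < T.length) (hp : 0 < p)
    (h : PeriodicOn T p l r) : minPeriod (frag T l r) ≤ p := by
  rcases le_or_gt p (r + 1 - l) with hple | hlt
  · exact minPeriod_le ((isPeriodOf_frag_iff hr).2 ⟨hp, hple, h⟩)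
  · have := (minPeriod_isPeriodOf (frag_ne_nil hlr hr)).2.1
    rw [length_frag hr] at this
    omega

theorem minPeriod_frag_eq_of_subwindow {x y A B : ℕ} (hxA : x ≤ A) (hBy : B ≤ y)
    (hy : y < T.length) (hper : IsPeriodOf (minPeriod (frag T x y)) (frag T A B))
    (hlen : A + minPeriod (frag T x y) + minPeriod (frag T A B) ≤ B + 1) :
    minPeriod (frag T x y) = minPeriod (frag T A B) := by
  have hAB : A ≤ B := by have := hper.1; omega
  refine le_antisymm ?_ (minPeriod_le hper)
  refine minPeriod_frag_le (by omega) hy (minPeriod_pos (frag_ne_nil hAB (by omega))) ?_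
  exact (periodicOn_minPeriod_frag (by omega) hy).of_subwindow
    (periodicOn_minPeriod_frag hAB (by omega)) hxA hBy hper.1 hlen

theorem lt_minPeriod_frag_of_getElem?_ne_right {b : ℕ} (hper : PeriodicOn T p l b)
    (hlen : l + 2 * p ≤ b + 1) (hb : b + 1 < T.length) (hne : T[b + 1]? ≠ T[b + 1 - p]?) :
    p < minPeriod (frag T l (b + 1)) := by
  by_contra! hqp
  set q := minPeriod (frag T l (b + 1))
  have hq0 : 0 < q := minPeriod_pos (frag_ne_nil (by omega) hb)
  have hq : PeriodicOn T q l (b + 1) := periodicOn_minPeriod_frag (by omega) hb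
  have hdiff := (hq.mono le_rfl (Nat.le_succ b)).sub hper hqp (by omega)
  have h₁ := hq (b + 1 - q) (by omega) (by omega)
  have h₂ := hdiff (b + 1 - p) (by omega) (by omega)
  rw [Nat.sub_add_cancel (by omega)] at h₁
  rw [show b + 1 - p + (p - q) = b + 1 - q by omega, h₁] at h₂
  exact hne h₂.symm

theorem lt_minPeriod_frag_of_getElem?_ne_left {a : ℕ} (hper : PeriodicOn T p a r)
    (hlen : a + 2 * p ≤ r + 1) (hr : r < T.length) (ha : 0 < a)
    (hne : T[a - 1]? ≠ T[a - 1 + p]?) : p < minPeriod (frag T (a - 1) r) := by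
  by_contra! hqp
  set q := minPeriod (frag T (a - 1) r)
  have hq0 : 0 < q := minPeriod_pos (frag_ne_nil (by omega) hr)
  have hq : PeriodicOn T q (a - 1) r := periodicOn_minPeriod_frag (by omega) hr
  have hdiff := (hq.mono (Nat.sub_le a 1) le_rfl).sub hper hqp (by omega)
  have h₁ := hq (a - 1) le_rfl (by omega)
  have h₂ := hdiff (a - 1 + q) (by omega) (by omega)
  rw [show a - 1 + q + (p - q) = a - 1 + p by omega] at h₂
  exact hne (h₁.trans h₂)

theorem not_periodicOn_of_getElem?_ne {a' b : ℕ} (hla : l < a') (ha'b : a' ≤ b + 1)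
    (hbr : b + 1 ≤ r) (hlen : l + 2 * p ≤ r + 1) (hb : T[b + 1]? ≠ T[b + 1 - p]?)
    (ha' : T[a' - 1]? ≠ T[a' - 1 + p]?) : ¬ PeriodicOn T p l r := by
  intro h
  rcases le_or_gt (l + p) (b + 1) with hc | hc
  · have := h (b + 1 - p) (by omega) (by omega)
    rw [Nat.sub_add_cancel (by omega)] at this
    exact hb this.symm
  · exact ha' (h (a' - 1) (by omega) (by omega))

end MinPeriod

theorem eq_flatten_replicate {U V : List α} {k : ℕ} (hlen : U.length = k * V.length)
    (h : ∀ i < U.length, U[i]? = V[i % V.length]?) : U = (replicate k V).flatten := by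
  induction k generalizing U with
  | zero => simpa using hlen
  | succ k ih =>
    rw [← take_append_drop V.length U, replicate_succ, flatten_cons]
    congr 1
    · refine ext_getElem? fun i => ?_
      rcases Nat.lt_or_ge i V.length with hi | hi
      · rw [getElem?_take_of_lt hi, h i (by rw [hlen, Nat.succ_mul]; omega), Nat.mod_eq_of_lt hi]
      · rw [getElem?_eq_none (by simp; omega), getElem?_eq_none hi]
    · refine ih (by simp [hlen, Nat.succ_mul]) fun i hi => ?_
      rw [getElem?_drop, h _ (by simp at hi; omega), Nat.add_mod_left]

theorem Primitive.minPeriod_append_self {U : List α} (hU : Primitive U) :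
    minPeriod (U ++ U) = U.length := by
  set n := U.length
  have hn : 0 < n := length_pos_iff.2 hU.1
  have hlen : (U ++ U).length = 2 * n := by simp [n, two_mul]
  have hUU : U ++ U ≠ [] := by simp [hU.1]
  have hperiod : IsPeriodOf n (U ++ U) := by
    refine ⟨hn, by omega, fun i hi => ?_⟩
    rw [getElem?_append_left (by omega), getElem?_append_right (by omega), Nat.add_sub_cancel]
  refine le_antisymm (minPeriod_le hperiod) (not_lt.1 fun hlt => ?_)
  set g := Nat.gcd (minPeriod (U ++ U)) n
  have hg : PeriodicOn (U ++ U) g 0 (2 * n - 1) := by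
    have h := (minPeriod_isPeriodOf hUU).periodicOn.gcd hperiod.periodicOn (by omega)
    rwa [hlen] at h
  have hgn : g ∣ n := Nat.gcd_dvd_right _ _
  have hg0 : 0 < g := Nat.gcd_pos_of_pos_right _ hn
  have hgr : g ≤ minPeriod (U ++ U) := Nat.le_of_dvd (minPeriod_pos hUU) (Nat.gcd_dvd_left _ _)
  have hrep : U = (replicate (n / g) (U.take g)).flatten := by
    refine eq_flatten_replicate (by rw [length_take_of_le (by omega), Nat.div_mul_cancel hgn])
      fun i hi => ?_
    have hig : i % g < g := Nat.mod_lt i hg0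
    rw [length_take_of_le (by omega), getElem?_take_of_lt hig,
      ← getElem?_append_left (l₁ := U) (l₂ := U) hi,
      ← getElem?_append_left (l₁ := U) (l₂ := U) (show i % g < n by omega),
      hg.getElem?_eq_of_modEq (Nat.zero_le _) (Nat.zero_le _) (by omega) (by omega)
        (Nat.mod_modEq i g).symm]
  have hk := hU.2 _ _ hrep
  have := Nat.div_mul_cancel hgn
  rw [hk, one_mul] at this
  omega

namespace OccursAt

variable {T W : List α} {s : ℕ}

theorem drop_take (ho : OccursAt T s W) {k m : ℕ} (h : k + m ≤ W.length) :
    (W.drop k).take m = (T.drop (s + k)).take m := by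
  conv_lhs => rw [← ho.2]
  rw [List.drop_take, take_take, drop_drop, min_eq_left (by omega)]

theorem take_eq_frag (ho : OccursAt T s W) {i : ℕ} (hi : i < W.length) :
    W.take (i + 1) = frag T s (s + i) := by
  simpa [frag, show s + i + 1 - s = i + 1 by omega] using
    ho.drop_take (k := 0) (m := i + 1) (by omega)

theorem drop_eq_frag (ho : OccursAt T s W) {j : ℕ} (hj : j < W.length) :
    W.drop j = frag T (s + j) (s + W.length - 1) := by
  have h := ho.drop_take (k := j) (m := W.length - j) (by omega)
  rw [take_of_length_le (by simp)] at h
  rw [h, frag, show s + W.length - 1 + 1 - (s + j) = W.length - j by omega]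

theorem eq_frag (ho : OccursAt T s W) (hW : W ≠ []) : W = frag T s (s + W.length - 1) := by
  simpa using ho.drop_eq_frag (length_pos_iff.2 hW)

theorem sInf_lt_minPeriod_take {p b : ℕ} (ho : OccursAt T s W) (hp : 0 < p)
    (hper : PeriodicOn T p s b) (hlen : s + 2 * p ≤ b + 1) (hbW : b + 1 < s + W.length)
    (hne : T[b + 1]? ≠ T[b + 1 - p]?) :
    sInf {i : ℕ | p < minPeriod (W.take (i + 1))} = b + 1 - s := by
  have hbT : b + 1 < T.length := by have := ho.1; omega
  refine IsLeast.csInf_eq ⟨?_, fun i hi => not_lt.1 fun hib => ?_⟩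
  · show p < minPeriod (W.take (b + 1 - s + 1))
    rw [ho.take_eq_frag (by omega), show s + (b + 1 - s) = b + 1 by omega]
    exact lt_minPeriod_frag_of_getElem?_ne_right hper hlen hbT hne
  · have hi' : p < minPeriod (W.take (i + 1)) := hi
    rw [ho.take_eq_frag (by omega)] at hi'
    exact hi'.not_ge (minPeriod_frag_le (by omega) (by omega) hp (hper.mono le_rfl (by omega)))

theorem sSup_lt_minPeriod_drop {p a : ℕ} (ho : OccursAt T s W) (hp : 0 < p)
    (hper : PeriodicOn T p a (s + W.length - 1)) (hsa : s < a) (hlen : a + 2 * p ≤ s + W.length)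
    (hne : T[a - 1]? ≠ T[a - 1 + p]?) :
    sSup {j : ℕ | j < W.length ∧ p < minPeriod (W.drop j)} = a - s - 1 := by
  have hWT : s + W.length - 1 < T.length := by have := ho.1; omega
  refine IsGreatest.csSup_eq ⟨⟨by omega, ?_⟩, fun j ⟨hjW, hj⟩ => not_lt.1 fun haj => ?_⟩
  · rw [ho.drop_eq_frag (by omega), show s + (a - s - 1) = a - 1 by omega]
    exact lt_minPeriod_frag_of_getElem?_ne_left hper (by omega) hWT (by omega) hne
  · rw [ho.drop_eq_frag hjW] at hj
    exact hj.not_ge (minPeriod_frag_le (by omega) hWT hp (hper.mono (by omega) le_rfl))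

end OccursAt

theorem square_straddles_boundary {T : List α} {n p a b a' b' s : ℕ} (hp : 0 < p)
    (h2p : 2 * p ≤ n) (hn : PeriodicOn T n s (s + 2 * n - 1)) (hF : PeriodicOn T p a b)
    (hF' : PeriodicOn T p a' b') (has : a ≤ s) (hsb' : s + 2 * n ≤ b' + 1) (hsa' : s < a')
    (ha'b : a' ≤ b + 1) (hbs : b + 1 < s + 2 * n) (hb : T[b + 1]? ≠ T[b + 1 - p]?)
    (ha' : T[a' - 1]? ≠ T[a' - 1 + p]?) : a' ≤ s + n ∧ s + n ≤ b + 1 := by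
  have hn' : PeriodicOn T n s (s + n - 1 + n) := hn.mono le_rfl (by omega)
  constructor
  · by_contra! h
    have hsecond := hn'.shift_right (hF.mono (r' := s + n - 1) has (by omega))
    exact not_periodicOn_of_getElem?_ne (by omega) ha'b (by omega) (by omega) hb ha' hsecond
  · by_contra! h
    have hfirst := hn'.shift_left (hF'.mono (l' := s + n) (by omega) (by omega))
    exact not_periodicOn_of_getElem?_ne hsa' ha'b (by omega) (by omega) hb ha' hfirst

namespace IsLayer

variable {T U : List α} {a b a' b' x y : ℕ}

theorem minPeriod_eq_length (hl : IsLayer T a b a' b' x y) (hU : Primitive U)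
    (hg : minPeriod (U ++ U) = minPeriod (frag T (max x a) (min y b'))) :
    minPeriod (frag T x y) = U.length := by
  obtain ⟨⟨-, hyT, -⟩, -, -, hlen, hper⟩ := hl
  rw [← hU.minPeriod_append_self, hg]
  refine minPeriod_frag_eq_of_subwindow (le_max_left _ _) (min_le_left _ _) hyT hper ?_
  have := minPeriod_le hper
  have := hper.1
  omega

theorem four_mul_le_length (hl : IsLayer T a b a' b' x y) (hU : Primitive U)
    (hg : minPeriod (U ++ U) = minPeriod (frag T (max x a) (min y b'))) :
    4 * minPeriod (frag T a b) ≤ U.length := by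
  rw [← hl.2.2.1, ← hl.minPeriod_eq_length hU hg]
  exact hl.2.1

theorem square_type {p s : ℕ} (hU : Primitive U) (hab : a < a') (hr : IsRun T a b)
    (hr' : IsRun T a' b') (hnb : Neighboring a b a' b') (hq : minPeriod (frag T a b) = p)
    (hq' : minPeriod (frag T a' b') = p) (hl : IsLayer T a b a' b' x y)
    (ho : OccursAt T s (U ++ U)) (hin : max x a ≤ s ∧ s + 2 * U.length ≤ min y b' + 1)
    (hg : minPeriod (U ++ U) = minPeriod (frag T (max x a) (min y b'))) :
    letI i : ℕ := sInf {i : ℕ | p < minPeriod ((U ++ U).take (i + 1))}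
    letI j : ℕ := sSup {j : ℕ | j < 2 * U.length ∧ p < minPeriod ((U ++ U).drop j)}
    j < U.length ∧ U.length ≤ i ∧
    (i - (j + 1) = min b b' + 1 - max a a' ∧
      ((U ++ U).drop (i - p)).take p = (T.drop (b + 1 - p)).take p ∧
      ((U ++ U).drop (j + 1)).take p = (T.drop a').take p) := by
  obtain ⟨haF, hbT, -, -, hF_right⟩ := hr
  obtain ⟨ha'F', hb'T, -, hF'_left, -⟩ := hr'
  rw [hq] at hF_right
  rw [hq'] at hF'_left
  set n := U.length
  have hWlen : (U ++ U).length = 2 * n := by simp [n, two_mul]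
  have hsT : s + 2 * n ≤ T.length := hWlen ▸ ho.1
  have h4p : 4 * p ≤ n := hq ▸ hl.four_mul_le_length hU hg
  have hp : 0 < p := hq ▸ minPeriod_pos (frag_ne_nil haF hbT)
  have hF : PeriodicOn T p a b := hq ▸ periodicOn_minPeriod_frag haF hbT
  have hF' : PeriodicOn T p a' b' := hq' ▸ periodicOn_minPeriod_frag ha'F' hb'T
  have has : a ≤ s := (le_max_right x a).trans hin.1
  have hsb' : s + 2 * n ≤ b' + 1 := hin.2.trans (by omega)
  have hW : minPeriod (frag T s (s + 2 * n - 1)) = n := by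
    rw [← hWlen, ← ho.eq_frag (by simp [hU.1]), hU.minPeriod_append_self]
  have hbW : b + 1 < s + 2 * n := by
    by_contra!
    have := minPeriod_frag_le (by omega) (by omega) hp
      (hF.mono (r' := s + 2 * n - 1) has (by omega))
    omega
  have hsa' : s < a' := by
    by_contra!
    have := minPeriod_frag_le (by omega) (by omega) hp
      (hF'.mono (l' := s) (r' := s + 2 * n - 1) this (by omega))
    omega
  have hb := hF_right.resolve_left (by omega)
  have ha' := hF'_left.resolve_left (by omega)
  have hWper : PeriodicOn T n s (s + 2 * n - 1) := by
    have := periodicOn_minPeriod_frag (T := T) (l := s) (r := s + 2 * n - 1) (by omega) (by omega)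
    rwa [hW] at this
  obtain ⟨ha'n, hnb1⟩ :=
    square_straddles_boundary hp (by omega) hWper hF hF' has hsb' hsa' hnb.2 hbW hb ha'
  have hi := ho.sInf_lt_minPeriod_take hp (hF.mono has le_rfl) (by omega) (by omega) hb
  have hj := ho.sSup_lt_minPeriod_drop hp (hF'.mono le_rfl (by omega)) hsa' (by omega) ha'
  rw [hWlen] at hj
  rw [hi, hj, min_eq_left (by omega : b ≤ b'), max_eq_right hab.le]
  refine ⟨by omega, by omega, by omega, ?_, ?_⟩
  · rw [ho.drop_take (by omega), show s + (b + 1 - s - p) = b + 1 - p by omega]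
  · rw [ho.drop_take (by omega), show s + (a' - s - 1 + 1) = a' by omega]

end IsLayer

theorem special_square_determines_type_general (T U : List α)
    (p : ℕ)
    (a₁ b₁ a₁' b₁' x₁ y₁ s₁ : ℕ)
    (a₂ b₂ a₂' b₂' x₂ y₂ s₂ : ℕ)
    (hprim : Primitive U)
    -- pyramid 1 and an occurrence of U² generated by a layer intersection
    (hab₁ : a₁ < a₁') (hr₁ : IsRun T a₁ b₁) (hr₁' : IsRun T a₁' b₁')
    (hnb₁ : Neighboring a₁ b₁ a₁' b₁')
    (hq₁ : minPeriod (frag T a₁ b₁) = p) (hq₁' : minPeriod (frag T a₁' b₁') = p)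
    (hl₁ : IsLayer T a₁ b₁ a₁' b₁' x₁ y₁)
    (ho₁ : OccursAt T s₁ (U ++ U))
    (hin₁ : max x₁ a₁ ≤ s₁ ∧ s₁ + 2 * U.length ≤ min y₁ b₁' + 1)
    (hg₁ : minPeriod (U ++ U) = minPeriod (frag T (max x₁ a₁) (min y₁ b₁')))
    -- pyramid 2 and an occurrence of U² generated by a layer intersection
    (hab₂ : a₂ < a₂') (hr₂ : IsRun T a₂ b₂) (hr₂' : IsRun T a₂' b₂')
    (hnb₂ : Neighboring a₂ b₂ a₂' b₂')
    (hq₂ : minPeriod (frag T a₂ b₂) = p) (hq₂' : minPeriod (frag T a₂' b₂') = p)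
    (hl₂ : IsLayer T a₂ b₂ a₂' b₂' x₂ y₂)
    (ho₂ : OccursAt T s₂ (U ++ U))
    (hin₂ : max x₂ a₂ ≤ s₂ ∧ s₂ + 2 * U.length ≤ min y₂ b₂' + 1)
    (hg₂ : minPeriod (U ++ U) = minPeriod (frag T (max x₂ a₂) (min y₂ b₂'))) :
    -- with i and j defined from U² and p:
    letI i : ℕ := sInf {i : ℕ | p < minPeriod ((U ++ U).take (i + 1))}
    letI j : ℕ := sSup {j : ℕ | j < 2 * U.length ∧ p < minPeriod ((U ++ U).drop j)}
    j < U.length ∧ U.length ≤ i ∧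
    -- the triple equals the type of pyramid 1
    (i - (j + 1) = min b₁ b₁' + 1 - max a₁ a₁' ∧
      ((U ++ U).drop (i - p)).take p = (T.drop (b₁ + 1 - p)).take p ∧
      ((U ++ U).drop (j + 1)).take p = (T.drop a₁').take p) ∧
    -- and also equals the type of pyramid 2 (hence the two types coincide)
    (i - (j + 1) = min b₂ b₂' + 1 - max a₂ a₂' ∧
      ((U ++ U).drop (i - p)).take p = (T.drop (b₂ + 1 - p)).take p ∧
      ((U ++ U).drop (j + 1)).take p = (T.drop a₂').take p) := by
  have h₁ := hl₁.square_type hprim hab₁ hr₁ hr₁' hnb₁ hq₁ hq₁' ho₁ hin₁ hg₁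
  have h₂ := hl₂.square_type hprim hab₂ hr₂ hr₂' hnb₂ hq₂ hq₂' ho₂ hin₂ hg₂
  exact ⟨h₁.1, h₁.2.1, h₁.2.2, h₂.2.2⟩

/-- For a special square `U²` generated by (layers of) two pyramids of runs of
period `p`, with `i` the smallest position with `per(U²[0..i]) > p` and `j`
the largest position with `per(U²[j..)) > p`, one has `j < |U| ≤ i` and the
triple `(i-j-1, U²[i-p..i-1], U²[j+1..j+p])` equals the type of each pyramid;
consequently pyramids of different types generate disjoint sets of special
squares. -/
theorem special_square_determines_type [LinearOrder α] (T U : List α)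
    (p : ℕ)
    (a₁ b₁ a₁' b₁' x₁ y₁ s₁ : ℕ) (lam₁ : List α)
    (a₂ b₂ a₂' b₂' x₂ y₂ s₂ : ℕ) (lam₂ : List α)
    (hU : U ≠ []) (hprim : Primitive U) (hhp : 4 * minPeriod U ≤ U.length)
    -- pyramid 1 and an occurrence of U² generated by a layer intersection
    (hab₁ : a₁ < a₁') (hr₁ : IsRun T a₁ b₁) (hr₁' : IsRun T a₁' b₁')
    (hnb₁ : Neighboring a₁ b₁ a₁' b₁')
    (hq₁ : minPeriod (frag T a₁ b₁) = p) (hq₁' : minPeriod (frag T a₁' b₁') = p)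
    (hlam₁ : LyndonRootOf (frag T a₁ b₁) lam₁ ∧ LyndonRootOf (frag T a₁' b₁') lam₁)
    (hl₁ : IsLayer T a₁ b₁ a₁' b₁' x₁ y₁)
    (ho₁ : OccursAt T s₁ (U ++ U))
    (hin₁ : max x₁ a₁ ≤ s₁ ∧ s₁ + 2 * U.length ≤ min y₁ b₁' + 1)
    (hg₁ : minPeriod (U ++ U) = minPeriod (frag T (max x₁ a₁) (min y₁ b₁')))
    -- pyramid 2 and an occurrence of U² generated by a layer intersection
    (hab₂ : a₂ < a₂') (hr₂ : IsRun T a₂ b₂) (hr₂' : IsRun T a₂' b₂')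
    (hnb₂ : Neighboring a₂ b₂ a₂' b₂')
    (hq₂ : minPeriod (frag T a₂ b₂) = p) (hq₂' : minPeriod (frag T a₂' b₂') = p)
    (hlam₂ : LyndonRootOf (frag T a₂ b₂) lam₂ ∧ LyndonRootOf (frag T a₂' b₂') lam₂)
    (hl₂ : IsLayer T a₂ b₂ a₂' b₂' x₂ y₂)
    (ho₂ : OccursAt T s₂ (U ++ U))
    (hin₂ : max x₂ a₂ ≤ s₂ ∧ s₂ + 2 * U.length ≤ min y₂ b₂' + 1)
    (hg₂ : minPeriod (U ++ U) = minPeriod (frag T (max x₂ a₂) (min y₂ b₂'))) :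
    -- with i and j defined from U² and p:
    letI i : ℕ := sInf {i : ℕ | p < minPeriod ((U ++ U).take (i + 1))}
    letI j : ℕ := sSup {j : ℕ | j < 2 * U.length ∧ p < minPeriod ((U ++ U).drop j)}
    j < U.length ∧ U.length ≤ i ∧
    -- the triple equals the type of pyramid 1
    (i - (j + 1) = min b₁ b₁' + 1 - max a₁ a₁' ∧
      ((U ++ U).drop (i - p)).take p = (T.drop (b₁ + 1 - p)).take p ∧
      ((U ++ U).drop (j + 1)).take p = (T.drop a₁').take p) ∧
    -- and also equals the type of pyramid 2 (hence the two types coincide)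
    (i - (j + 1) = min b₂ b₂' + 1 - max a₂ a₂' ∧
      ((U ++ U).drop (i - p)).take p = (T.drop (b₂ + 1 - p)).take p ∧
      ((U ++ U).drop (j + 1)).take p = (T.drop a₂').take p) :=
  special_square_determines_type_general T U p a₁ b₁ a₁' b₁' x₁ y₁ s₁ a₂ b₂ a₂' b₂' x₂ y₂ s₂ hprim
    hab₁ hr₁ hr₁' hnb₁ hq₁ hq₁' hl₁ ho₁ hin₁ hg₁ hab₂ hr₂ hr₂' hnb₂ hq₂ hq₂' hl₂ ho₂ hin₂ hg₂
end

section
/- Let Sync be a τ-synchronizing set of T. If two runs R1 and R2 of T both have period p ≥ 2τ, then R1 and R2 have the same Lyndon root if and only if they have the same sparse-Lyndon root (the length-p fragment starting at the sparse-Lyndon position). -/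
open List

variable {α : Type*}

/-! The Lyndon root of a run is the least rotation of its root `T[a..a+p)`, so two runs have the
same Lyndon root iff their roots are rotations of each other. The length-`p` windows starting in
`[a, a+p)` are exactly the rotations of the root. If the roots are rotations of each other, the
sparse-Lyndon root of one run therefore reappears as a window starting in the first period of the
other; since `p ≥ 2τ`, consistency makes that start synchronizing, so the window is at least the
sparse-Lyndon root of the other run. By symmetry the two sparse-Lyndon roots are equal.
Conversely, an equal sparse-Lyndon root is a rotation of both roots. -/

theorem List.take_le_take_of_le [LinearOrder α] {u v : List α} (h : u ≤ v) (n : ℕ) :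
    u.take n ≤ v.take n := by
  rw [le_iff_lt_or_eq] at h
  obtain h | rfl := h
  · replace h : List.Lex (· < ·) u v := h
    induction h generalizing n with
    | nil => cases n with
      | zero => exact le_rfl
      | succ n => exact le_of_lt (List.Lex.nil : List.Lex (· < ·) [] _)
    | cons _ ih => cases n with
      | zero => exact le_rfl
      | succ n => exact List.cons_le_cons _ (ih n)
    | rel hab => cases n with
      | zero => exact le_rfl
      | succ n => exact le_of_lt (List.Lex.rel hab : List.Lex (· < ·) _ _)
  · exact le_rfl

theorem rot_eq_rotate {L : List α} {c : ℕ} (h : c ≤ L.length) : rot c L = L.rotate c :=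
  (List.rotate_eq_drop_append_take h).symm

theorem isRotated_rot (L : List α) (c : ℕ) : L ~r rot c L := by
  rcases le_or_gt c L.length with h | h
  · exact ⟨c, (rot_eq_rotate h).symm⟩
  · exact ⟨0, by simp [rot, List.drop_eq_nil_of_le h.le, List.take_of_length_le h.le]⟩

theorem List.IsRotated.exists_lt_eq_rot {L w : List α} {p : ℕ} (hp : 0 < p)
    (hL : L.length ≤ p) (h : L ~r w) : ∃ c < p, w = rot c L := by
  obtain ⟨n, rfl⟩ := h
  rcases eq_or_ne L [] with rfl | hL0
  · exact ⟨0, hp, by simp [rot]⟩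
  · have hpos := List.length_pos_iff.mpr hL0
    exact ⟨n % L.length, (Nat.mod_lt _ hpos).trans_le hL,
      by rw [rot_eq_rotate (Nat.mod_lt _ hpos).le, List.rotate_mod]⟩

theorem lyndonRootOf_iff [LinearOrder α] {S lam : List α} (h : 0 < minPeriod S) :
    LyndonRootOf S lam ↔
      S.take (minPeriod S) ~r lam ∧ ∀ w, S.take (minPeriod S) ~r w → lam ≤ w := by
  have hlen : (S.take (minPeriod S)).length ≤ minPeriod S := List.length_take_le _ _
  constructor
  · rintro ⟨⟨c, -, rfl⟩, hmin⟩
    refine ⟨isRotated_rot _ c, fun w hw => ?_⟩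
    obtain ⟨c', hc', rfl⟩ := hw.exists_lt_eq_rot h hlen
    exact hmin c' hc'
  · rintro ⟨hlam, hmin⟩
    exact ⟨hlam.exists_lt_eq_rot h hlen, fun c _ => hmin _ (isRotated_rot _ c)⟩

theorem exists_lyndonRootOf [LinearOrder α] {S : List α} (h : 0 < minPeriod S) :
    ∃ lam, LyndonRootOf S lam := by
  obtain ⟨c, hc, hmin⟩ := Finset.exists_min_image (Finset.range (minPeriod S))
    (fun c => rot c (S.take (minPeriod S))) ⟨0, Finset.mem_range.mpr h⟩
  exact ⟨_, ⟨c, Finset.mem_range.mp hc, rfl⟩, fun c' hc' => hmin c' (Finset.mem_range.mpr hc')⟩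

theorem forall_lyndonRootOf_iff_iff_isRotated [LinearOrder α] {S₁ S₂ : List α}
    (h₁ : 0 < minPeriod S₁) (h₂ : 0 < minPeriod S₂) :
    (∀ lam, LyndonRootOf S₁ lam ↔ LyndonRootOf S₂ lam) ↔
      S₁.take (minPeriod S₁) ~r S₂.take (minPeriod S₂) := by
  constructor
  · intro h
    obtain ⟨lam, hlam⟩ := exists_lyndonRootOf h₁
    exact ((lyndonRootOf_iff h₁).mp hlam).1.trans
      ((lyndonRootOf_iff h₂).mp ((h lam).mp hlam)).1.symm
  · intro hrot lam
    have hw : ∀ w, S₁.take (minPeriod S₁) ~r w ↔ S₂.take (minPeriod S₂) ~r w :=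
      fun w => ⟨hrot.symm.trans, hrot.trans⟩
    simp only [lyndonRootOf_iff h₁, lyndonRootOf_iff h₂, hw]

theorem isPeriodOf_length_s16 {S : List α} (h : S ≠ []) : IsPeriodOf S.length S :=
  ⟨List.length_pos_iff.mpr h, le_rfl, fun _ hi => by omega⟩

theorem isPeriodOf_minPeriod {S : List α} (h : S ≠ []) : IsPeriodOf (minPeriod S) S :=
  Nat.sInf_mem (s := {p | IsPeriodOf p S}) ⟨_, isPeriodOf_length_s16 h⟩

theorem IsPeriodOf.getElem?_mod {p : ℕ} {S : List α} (h : IsPeriodOf p S) {k : ℕ}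
    (hk : k < S.length) : S[k % p]? = S[k]? := by
  induction k using Nat.strong_induction_on with
  | _ k ih =>
    rcases lt_or_ge k p with hkp | hpk
    · rw [Nat.mod_eq_of_lt hkp]
    · rw [Nat.mod_eq_sub_mod hpk, ih (k - p) (by have := h.1; omega) (by omega), h.2.2 (k - p) (by omega),
        Nat.sub_add_cancel hpk]

theorem IsPeriodOf.take_drop_eq_rotate {p : ℕ} {S : List α} (h : IsPeriodOf p S) {c : ℕ}
    (hc : c + p ≤ S.length) : (S.drop c).take p = (S.take p).rotate c := by
  have hlen : (S.take p).length = p := by simp; omega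
  apply List.ext_getElem?
  intro k
  rcases lt_or_ge k p with hk | hk
  · rw [List.getElem?_rotate (by omega), hlen, List.getElem?_take_of_lt (Nat.mod_lt _ h.1),
      h.getElem?_mod (by omega), List.getElem?_take_of_lt hk, List.getElem?_drop, Nat.add_comm]
  · rw [List.getElem?_eq_none (by simp; omega), List.getElem?_eq_none (by simp; omega)]

theorem drop_take_frag (T : List α) {a b c p : ℕ} (h : c + p ≤ b + 1 - a) :
    ((frag T a b).drop c).take p = (T.drop (a + c)).take p := by
  rw [frag, List.drop_take, List.take_take, List.drop_drop, Nat.min_eq_left (by omega)]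

theorem IsRun.length_frag {T : List α} {a b : ℕ} (h : IsRun T a b) :
    (frag T a b).length = b + 1 - a := by
  obtain ⟨hab, hbT, -⟩ := h
  simp only [frag, List.length_take, List.length_drop]
  omega

theorem IsRun.frag_ne_nil {T : List α} {a b : ℕ} (h : IsRun T a b) : frag T a b ≠ [] :=
  List.ne_nil_of_length_pos (by rw [h.length_frag]; have := h.1; omega)

theorem IsRun.minPeriod_pos {T : List α} {a b : ℕ} (h : IsRun T a b) :
    0 < minPeriod (frag T a b) :=
  (isPeriodOf_minPeriod h.frag_ne_nil).1

theorem IsRun.add_two_mul_minPeriod_le_length {T : List α} {a b : ℕ} (h : IsRun T a b) :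
    a + 2 * minPeriod (frag T a b) ≤ T.length := by
  obtain ⟨hab, hbT, h2p, -⟩ := h
  omega

theorem IsRun.take_frag {T : List α} {a b p : ℕ} (h : IsRun T a b)
    (hp : minPeriod (frag T a b) = p) : (frag T a b).take p = (T.drop a).take p := by
  have h2p := h.2.2.1
  rw [hp] at h2p
  rw [frag, List.take_take, Nat.min_eq_left (by omega)]

theorem IsRun.take_drop_add_eq_rotate {T : List α} {a b p c : ℕ} (h : IsRun T a b)
    (hp : minPeriod (frag T a b) = p) (hc : c < p) :
    (T.drop (a + c)).take p = ((T.drop a).take p).rotate c := by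
  have hper : IsPeriodOf p (frag T a b) := hp ▸ isPeriodOf_minPeriod h.frag_ne_nil
  have h2p := h.2.2.1
  rw [hp] at h2p
  have hwin := hper.take_drop_eq_rotate (c := c) (by rw [h.length_frag]; omega)
  rwa [drop_take_frag T (by omega), h.take_frag hp] at hwin

theorem IsRun.isRotated_take_drop {T : List α} {a b p i : ℕ} (h : IsRun T a b)
    (hp : minPeriod (frag T a b) = p) (hai : a ≤ i) (hip : i < a + p) :
    (T.drop a).take p ~r (T.drop i).take p :=
  ⟨i - a, by rw [← h.take_drop_add_eq_rotate hp (by omega), Nat.add_sub_cancel' hai]⟩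

theorem IsRun.exists_take_drop_eq_of_isRotated {T w : List α} {a b p : ℕ} (h : IsRun T a b)
    (hp : minPeriod (frag T a b) = p) (hw : (T.drop a).take p ~r w) :
    ∃ c < p, (T.drop (a + c)).take p = w := by
  obtain ⟨n, rfl⟩ := hw
  have hp0 : 0 < p := hp ▸ h.minPeriod_pos
  have hlen : ((T.drop a).take p).length = p := by
    have := h.add_two_mul_minPeriod_le_length
    simp only [List.length_take, List.length_drop]
    omega
  refine ⟨n % p, Nat.mod_lt _ hp0, ?_⟩
  rw [h.take_drop_add_eq_rotate hp (Nat.mod_lt _ hp0)]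
  conv_rhs => rw [← List.rotate_mod, hlen]

theorem SyncSet.mem_of_take_eq {T : List α} {τ m i j : ℕ} {S : Set ℕ} (hS : SyncSet T τ S)
    (hm : 2 * τ ≤ m) (hi : i ∈ S) (hj : j + 2 * τ ≤ T.length)
    (h : (T.drop i).take m = (T.drop j).take m) : j ∈ S := by
  refine (hS.2.1 i j (hS.1 i hi) hj ?_).mp hi
  simpa only [List.take_take, Nat.min_eq_left hm] using congrArg (List.take (2 * τ)) h

theorem IsRun.take_drop_le_of_isRotated [LinearOrder α] {T : List α} {τ a b p i k : ℕ}
    {S : Set ℕ} (h : IsRun T a b) (hp : minPeriod (frag T a b) = p) (hS : SyncSet T τ S)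
    (hτp : 2 * τ ≤ p) (hi : ∀ j ∈ S, a ≤ j → j < a + p → T.drop i ≤ T.drop j) (hk : k ∈ S)
    (hrot : (T.drop a).take p ~r (T.drop k).take p) :
    (T.drop i).take p ≤ (T.drop k).take p := by
  obtain ⟨c, hc, hw⟩ := h.exists_take_drop_eq_of_isRotated hp hrot
  have hlen := h.add_two_mul_minPeriod_le_length
  rw [hp] at hlen
  have hc_mem : a + c ∈ S := hS.mem_of_take_eq hτp hk (by omega) hw.symm
  rw [← hw]
  exact List.take_le_take_of_le (hi _ hc_mem (by omega) (by omega)) p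

theorem same_lyndon_iff_same_sparse_lyndon_general [LinearOrder α] (T : List α)
    (τ : ℕ) (S : Set ℕ) (a b a' b' p i₁ i₂ : ℕ)
    (hS : SyncSet T τ S)
    (h1 : IsRun T a b) (h2 : IsRun T a' b')
    (hp1 : minPeriod (frag T a b) = p) (hp2 : minPeriod (frag T a' b') = p)
    (hp : 2 * τ ≤ p)
    (hi₁ : i₁ ∈ S ∧ a ≤ i₁ ∧ i₁ < a + p ∧
      ∀ j ∈ S, a ≤ j → j < a + p → T.drop i₁ ≤ T.drop j)
    (hi₂ : i₂ ∈ S ∧ a' ≤ i₂ ∧ i₂ < a' + p ∧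
      ∀ j ∈ S, a' ≤ j → j < a' + p → T.drop i₂ ≤ T.drop j) :
    (∀ lam : List α, LyndonRootOf (frag T a b) lam ↔
      LyndonRootOf (frag T a' b') lam) ↔
    (T.drop i₁).take p = (T.drop i₂).take p := by
  obtain ⟨hi₁S, hai₁, hi₁p, hmin₁⟩ := hi₁
  obtain ⟨hi₂S, hai₂, hi₂p, hmin₂⟩ := hi₂
  rw [forall_lyndonRootOf_iff_iff_isRotated h1.minPeriod_pos h2.minPeriod_pos, hp1, hp2,
    h1.take_frag hp1, h2.take_frag hp2]
  have hw₁ := h1.isRotated_take_drop hp1 hai₁ hi₁p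
  have hw₂ := h2.isRotated_take_drop hp2 hai₂ hi₂p
  constructor
  · intro hroot
    exact le_antisymm (h1.take_drop_le_of_isRotated hp1 hS hp hmin₁ hi₂S (hroot.trans hw₂))
      (h2.take_drop_le_of_isRotated hp2 hS hp hmin₂ hi₁S (hroot.symm.trans hw₁))
  · intro heq
    exact hw₁.trans (heq ▸ hw₂.symm)

/-- Two runs with period `p ≥ 2τ` have the same Lyndon root iff they have the
same sparse-Lyndon root. -/
theorem same_lyndon_iff_same_sparse_lyndon [LinearOrder α] (T : List α)
    (τ : ℕ) (S : Set ℕ) (a b a' b' p i₁ i₂ : ℕ)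
    (hτ : 1 ≤ τ) (hS : SyncSet T τ S)
    (h1 : IsRun T a b) (h2 : IsRun T a' b')
    (hp1 : minPeriod (frag T a b) = p) (hp2 : minPeriod (frag T a' b') = p)
    (hp : 2 * τ ≤ p)
    (hi₁ : i₁ ∈ S ∧ a ≤ i₁ ∧ i₁ < a + p ∧
      ∀ j ∈ S, a ≤ j → j < a + p → T.drop i₁ ≤ T.drop j)
    (hi₂ : i₂ ∈ S ∧ a' ≤ i₂ ∧ i₂ < a' + p ∧
      ∀ j ∈ S, a' ≤ j → j < a' + p → T.drop i₂ ≤ T.drop j) :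
    (∀ lam : List α, LyndonRootOf (frag T a b) lam ↔
      LyndonRootOf (frag T a' b') lam) ↔
    (T.drop i₁).take p = (T.drop i₂).take p :=
  same_lyndon_iff_same_sparse_lyndon_general T τ S a b a' b' p i₁ i₂ hS h1 h2 hp1 hp2 hp hi₁ hi₂
end

section
/- Let U be a periodic fragment with Lyndon root λ, period p = |λ|, and Lyndon representation U = P λ^e S with |P|, |S| < |λ|. Then U generates a cyclic rotation rot_c(λ^{2α}) for every α with 2 ≤ α < ⌊|U|/(2p)⌋ and every c ∈ [0..p), i.e., all p cyclic rotations of λ^{2α}. -/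
open List

variable {α : Type*}

lemma length_rot (c : ℕ) (L : List α) : (rot c L).length = L.length := by
  simp [rot]; omega

lemma join_repl_length (V : List α) (m : ℕ) :
    ((List.replicate m V).flatten).length = m * V.length := by
  induction m with
  | zero => simp
  | succ k ih => simp [List.replicate_succ, ih, Nat.succ_mul]; ring

lemma join_repl_succ (V : List α) (m : ℕ) :
    (List.replicate (m+1) V).flatten = V ++ (List.replicate m V).flatten := by
  simp [List.replicate_succ]

lemma join_repl_add (V : List α) (m n : ℕ) :
    (List.replicate (m+n) V).flatten = (List.replicate m V).flatten ++ (List.replicate n V).flatten := by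
  induction m with
  | zero => simp
  | succ k ih => rw [show k+1+n = (k+n)+1 from by omega, join_repl_succ, ih, join_repl_succ,
      List.append_assoc]

lemma join_repl_succ' (V : List α) (m : ℕ) :
    (List.replicate (m+1) V).flatten = (List.replicate m V).flatten ++ V := by
  rw [join_repl_add]; simp

lemma pow_period (V : List α) (m i : ℕ)
    (h : i + V.length < ((List.replicate m V).flatten).length) :
    ((List.replicate m V).flatten)[i]? = ((List.replicate m V).flatten)[i + V.length]? := by
  cases m with
  | zero => simp at h
  | succ k =>
    have hlen := join_repl_length V (k+1)
    have hlen' := join_repl_length V k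
    have hi : i < ((List.replicate k V).flatten).length := by
      rw [hlen'] ; rw [hlen] at h; rw [Nat.succ_mul] at h; omega
    conv_lhs => rw [join_repl_succ' V k]
    conv_rhs => rw [join_repl_succ V k]
    rw [List.getElem?_append_left hi, List.getElem?_append_right (by omega)]
    congr 1; omega

lemma rot_pow (T D : List α) (m : ℕ) :
    (List.replicate (m+1) (D++T)).flatten = D ++ (List.replicate m (T++D)).flatten ++ T := by
  induction m with
  | zero => simp
  | succ k ih =>
    rw [join_repl_succ, ih]
    simp only [join_repl_succ, ← List.append_assoc]

lemma rot_get? (L : List α) (c i : ℕ) (hc : c ≤ L.length) (hi : i < L.length) :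
    (rot c L)[i]? = L[(i+c) % L.length]? := by
  have hd : (L.drop c).length = L.length - c := by simp
  rcases lt_or_ge i (L.length - c) with h | h
  · rw [rot, List.getElem?_append_left (by omega), List.getElem?_drop]
    rw [Nat.mod_eq_of_lt (by omega)]
    congr 1; omega
  · rw [rot, List.getElem?_append_right (by omega), hd,
      List.getElem?_take_of_lt (show i - (L.length - c) < c by omega)]
    have : (i+c) % L.length = i + c - L.length := by
      rw [Nat.mod_eq_sub_mod (by omega), Nat.mod_eq_of_lt (by omega)]
    rw [this]; congr 1; omega

lemma rot_cancel (L : List α) (c : ℕ) (hc : c ≤ L.length) :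
    rot (L.length - c) (rot c L) = L := by
  have hd : (L.drop c).length = L.length - c := by simp
  rw [rot, rot, ← hd, List.drop_left, List.take_left, List.take_append_drop]

lemma rot_cyclic (L : List α) (n d g : ℕ) (hn : L.length = n) (hd : d ≤ n)
    (h : ∀ i < n, L[i]? = L[(i+g) % n]?) :
    ∀ i < n, (rot d L)[i]? = (rot d L)[(i+g) % n]? := by
  intro i hi
  have hpos : 0 < n := by omega
  rw [rot_get? L d i (by omega) (by omega),
      rot_get? L d ((i+g) % n) (by omega) (by rw [hn]; exact Nat.mod_lt _ hpos), hn]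
  rw [Nat.mod_add_mod]
  have := h ((i+d) % n) (Nat.mod_lt _ hpos)
  rw [this, Nat.mod_add_mod, show i+d+g = i+g+d from by omega]

lemma get?_mod {S : List α} {p : ℕ} (h : IsPeriodOf p S) :
    ∀ i, i < S.length → S[i]? = S[i % p]? := by
  intro i
  induction i using Nat.strong_induction_on with
  | _ i ih =>
    intro hi
    rcases lt_or_ge i p with hip | hip
    · rw [Nat.mod_eq_of_lt hip]
    · have hp := h.1
      rw [Nat.mod_eq_sub_mod hip]
      have h1 : S[i - p]? = S[i - p + p]? := h.2.2 (i - p) (by omega)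
      have h2 : i - p + p = i := by omega
      rw [h2] at h1
      rw [← h1]
      exact ih (i - p) (by omega) (by omega)


/-- A periodic fragment `U = P λᵉ S` with Lyndon root `λ` generates all `p`
cyclic rotations of `λ^{2A}` for every `A` with `2 ≤ A < ⌊|U|/(2p)⌋`. -/
theorem np_squares_from_lyndon_representation [LinearOrder α]
    (U P Ssuf lam : List α) (e : ℕ)
    (hlam : LyndonRootOf U lam)
    (hrep : U = P ++ (List.replicate e lam).flatten ++ Ssuf)
    (hP : P.length < lam.length) (hSsuf : Ssuf.length < lam.length)
    (hroot : lam.length = minPeriod U)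
    (hper : 2 * minPeriod U ≤ U.length) :
    ∀ A c : ℕ, 2 ≤ A → A < U.length / (2 * lam.length) → c < lam.length →
      rot c ((List.replicate (2 * A) lam).flatten) <:+: U ∧
      minPeriod (rot c ((List.replicate (2 * A) lam).flatten)) = minPeriod U := by
  intro A c hA hAlt hc
  obtain ⟨⟨c0, hc0, hlam0⟩, -⟩ := hlam
  set p := lam.length with hpdef
  have hroot' : minPeriod U = p := hroot.symm
  rw [hroot'] at hc0 hlam0 hper
  have hppos : 0 < p := by omega
  have hUlen : U.length = P.length + e * p + Ssuf.length := by
    rw [hrep]; simp [join_repl_length, ← hpdef, Nat.add_assoc]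
  have hAe : 2 * A + 1 ≤ e := by
    have h1 : (A + 1) * (2 * p) ≤ U.length :=
      (Nat.le_div_iff_mul_le (show 0 < 2 * p by omega)).mp hAlt
    by_contra hcon
    have h2 : e * p ≤ 2 * A * p := Nat.mul_le_mul_right p (by omega)
    nlinarith [h1, h2, hUlen, hP, hSsuf, hppos]
  set T := lam.take c with hT
  set D := lam.drop c with hD
  have hTD : T ++ D = lam := List.take_append_drop c lam
  set V := rot c lam with hVdef
  have hVlen : V.length = p := by rw [hVdef, length_rot]
  set W := rot c ((List.replicate (2*A) lam).flatten) with hWdef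
  have hA1 : 2 * A = (2*A - 1) + 1 := by omega
  have hWform : W = D ++ (List.replicate (2*A-1) lam).flatten ++ T := by
    rw [hWdef, hA1, join_repl_succ, rot,
        List.drop_append_of_le_length (le_of_lt hc),
        List.take_append_of_le_length (le_of_lt hc)]
    simp only [Nat.add_sub_cancel, ← hT, ← hD]
  have hWpow : W = (List.replicate (2*A) V).flatten := by
    rw [hA1, show V = D ++ T from rfl, rot_pow, hTD, hWform]
  -- infix part
  have hinf1 : T ++ W ++ D = (List.replicate (2*A+1) lam).flatten := by
    rw [show 2*A+1 = (2*A-1) + 1 + 1 from by omega, join_repl_succ', join_repl_succ,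
        hWform, ← hTD]
    simp only [List.append_assoc]
  have hinf2 : (List.replicate (2*A+1) lam).flatten <+: (List.replicate e lam).flatten := by
    have he : (List.replicate e lam).flatten
        = (List.replicate (2*A+1) lam).flatten ++ (List.replicate (e-(2*A+1)) lam).flatten := by
      rw [← join_repl_add]; congr 2; omega
    rw [he]
    exact List.prefix_append _ _
  have hinfW : W <:+: U := by
    have h1 : W <:+: (List.replicate (2*A+1) lam).flatten := ⟨T, D, hinf1⟩
    have h2 : (List.replicate e lam).flatten <:+: U := ⟨P, Ssuf, hrep.symm⟩
    exact h1.trans (hinf2.isInfix.trans h2)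
  -- period part
  have hWlen : W.length = 2 * A * p := by rw [hWpow, join_repl_length, hVlen]
  have h4p : 4 * p ≤ W.length := by
    rw [hWlen]; exact Nat.mul_le_mul_right p (by omega)
  have hWp : IsPeriodOf p W := by
    refine ⟨hppos, by omega, ?_⟩
    intro i hi
    rw [hWpow] at hi ⊢
    have := pow_period V (2*A) i (by rwa [hVlen])
    rwa [hVlen] at this
  have hq_mem : IsPeriodOf (minPeriod W) W := Nat.sInf_mem (s := {r | IsPeriodOf r W}) ⟨p, hWp⟩
  have hq_le : minPeriod W ≤ p := Nat.sInf_le (s := {r | IsPeriodOf r W}) hWp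
  set q := minPeriod W with hqdef
  have hqp : q = p := by
    by_contra hnep
    have hqlt : q < p := lt_of_le_of_ne hq_le hnep
    have hqpos : 0 < q := hq_mem.1
    have hUper : IsPeriodOf p U := by
      have h0 : (0:ℕ) < sInf {r | IsPeriodOf r U} := by
        rw [show sInf {r | IsPeriodOf r U} = minPeriod U from rfl]; omega
      have := Nat.sInf_mem (Nat.nonempty_of_pos_sInf h0)
      rwa [show sInf {r | IsPeriodOf r U} = minPeriod U from rfl, hroot'] at this
    have hVW : ∀ j, j < p → V[j]? = W[j]? := by
      intro j hj
      rw [hWpow, hA1, join_repl_succ, List.getElem?_append_left (show j < V.length by omega)]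
    have hVcyc : ∀ i < p, V[i]? = V[(i+q) % p]? := by
      intro i hi
      rcases lt_or_ge (i+q) p with h | h
      · rw [Nat.mod_eq_of_lt h, hVW i hi, hVW (i+q) h]
        exact hq_mem.2.2 i (by omega)
      · have hm : (i+q) % p = i+q-p := by
          rw [Nat.mod_eq_sub_mod h, Nat.mod_eq_of_lt (by omega)]
        rw [hm, hVW i hi, hVW (i+q-p) (by omega)]
        have e1 : W[i]? = W[i+q]? := hq_mem.2.2 i (by omega)
        have e2 : W[i+q-p]? = W[i+q]? := by
          have := hWp.2.2 (i+q-p) (by omega)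
          rwa [show i+q-p+p = i+q from by omega] at this
        rw [e1, e2]
    have hlamrot : lam = rot (p - c) V := by
      rw [hVdef, hpdef]
      exact (rot_cancel lam c (le_of_lt hc)).symm
    have hlamcyc : ∀ i < p, lam[i]? = lam[(i+q) % p]? := by
      intro i hi
      rw [hlamrot]
      exact rot_cyclic V p (p-c) q hVlen (by omega) hVcyc i hi
    set Q := U.take p with hQdef
    have hQlen : Q.length = p := by rw [hQdef, List.length_take]; omega
    have hQrot : Q = rot (p - c0) lam := by
      rw [hlam0]
      have := rot_cancel Q c0 (by omega)
      rw [hQlen] at this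
      exact this.symm
    have hQcyc : ∀ i < p, Q[i]? = Q[(i+q) % p]? := by
      intro i hi
      rw [hQrot]
      exact rot_cyclic lam p (p - c0) q hpdef.symm (by omega) hlamcyc i hi
    have hUq : IsPeriodOf q U := by
      refine ⟨hqpos, by omega, ?_⟩
      intro i hi
      have hQ1 : ∀ j, j < U.length → U[j]? = Q[j % p]? := by
        intro j hj
        rw [get?_mod hUper j hj, hQdef, List.getElem?_take_of_lt (Nat.mod_lt _ hppos)]
      rw [hQ1 i (by omega), hQ1 (i+q) hi, ← Nat.mod_add_mod]
      exact hQcyc (i % p) (Nat.mod_lt _ hppos)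
    have : minPeriod U ≤ q := Nat.sInf_le (s := {r | IsPeriodOf r U}) hUq
    omega
  exact ⟨hinfW, by rw [hqp]; exact hroot'.symm⟩
end

section
/- For every integer q ≥ 3 and sufficiently large even n, the string S = (ab)^{n/4} (ba)^{n/4} of length n contains at least (n/2 - q - 1)/2 runs with period at least q; specifically, for each i with 2i+1 ≥ q and 2i+1 ≤ n/2 - 1, the fragment b(ab)^i b(ab)^i of S starting at position n/2 - 1 - 2i is a run with period 2i + 1. -/
open List

variable {α : Type*}

/-- The string `(ab)^m (ba)^m` over `{a := false, b := true}`. -/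
def abba (m : ℕ) : List Bool :=
  (List.replicate m [false, true]).flatten ++ (List.replicate m [true, false]).flatten


/-!
Position `j < 4m` of `(ab)^m (ba)^m` holds `b` iff (`j < 2m` iff `j` is odd), and position
`j < 4i+2` of `b(ab)^i b(ab)^i` holds `b` iff (`j < 2i+1` iff `j` is even); so every letter
comparison below is linear arithmetic with parities. The fragment of length `4i+2` centred on the
middle `bb` is the square `b(ab)^i b(ab)^i`. Its minimal period is `2i+1`, since a smaller period
is refuted by a single comparison whether it is even or odd, and the letters just outside it break
that period, so it is a run. Distinct `i` give distinct runs, and `q/2 ≤ i < m` already gives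
`(2m-q-1)/2` runs of period at least `q`.
-/

section Fragments

variable (T : List α)

lemma frag_getElem? (a b : ℕ) {j : ℕ} (hj : j < b + 1 - a) : (frag T a b)[j]? = T[a + j]? := by
  rw [frag, getElem?_take_of_lt hj, getElem?_drop]

lemma frag_length (a b : ℕ) : (frag T a b).length = min (b + 1 - a) (T.length - a) := by
  simp [frag]

lemma setOf_isRun_finite : {xy : ℕ × ℕ | IsRun T xy.1 xy.2}.Finite :=
  ((Set.finite_Iio T.length).prod (Set.finite_Iio T.length)).subset
    fun _ ⟨hab, hb, _⟩ => ⟨lt_of_le_of_lt hab hb, hb⟩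

end Fragments

lemma isPeriodOf_length_append_self {X : List α} (hX : X ≠ []) :
    IsPeriodOf X.length (X ++ X) := by
  refine ⟨length_pos_of_ne_nil hX, by simp, fun j hj => ?_⟩
  rw [getElem?_append_left (by simpa using hj), getElem?_append_right (by omega),
    Nat.add_sub_cancel]

lemma minPeriod_eq_of_isPeriodOf {S : List α} {p : ℕ} (hp : IsPeriodOf p S)
    (hmin : ∀ p', IsPeriodOf p' S → p ≤ p') : minPeriod S = p :=
  le_antisymm (Nat.sInf_le hp) (le_csInf ⟨p, hp⟩ hmin)

lemma getElem?_flatten_replicate_pair (x y : α) :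
    ∀ {m j : ℕ}, j < 2 * m →
      (replicate m [x, y]).flatten[j]? = some (if j % 2 = 0 then x else y)
  | m + 1, 0, _ => rfl
  | m + 1, 1, _ => rfl
  | m + 1, j + 2, h => by
    simpa [replicate_succ, Nat.add_mod_right] using
      getElem?_flatten_replicate_pair x y (m := m) (j := j) (by omega)

lemma length_flatten_replicate_pair (x y : α) (m : ℕ) :
    (replicate m [x, y]).flatten.length = 2 * m := by
  simp [mul_comm]

def bAbPow (i : ℕ) : List Bool := true :: (replicate i [false, true]).flatten

lemma length_bAbPow (i : ℕ) : (bAbPow i).length = 2 * i + 1 := by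
  rw [bAbPow, length_cons, length_flatten_replicate_pair]

lemma bAbPow_getElem? {i j : ℕ} (hj : j < 2 * i + 1) :
    (bAbPow i)[j]? = some (decide (j % 2 = 0)) := by
  cases j with
  | zero => rfl
  | succ j =>
    rw [bAbPow, getElem?_cons_succ, getElem?_flatten_replicate_pair _ _ (by omega)]
    split_ifs <;> simp <;> omega

lemma bAbPow_sq_getElem? {i j : ℕ} (hj : j < 4 * i + 2) :
    (bAbPow i ++ bAbPow i)[j]? = some (decide (j < 2 * i + 1 ↔ j % 2 = 0)) := by
  by_cases h : j < 2 * i + 1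
  · rw [getElem?_append_left (by rwa [length_bAbPow]), bAbPow_getElem? h]
    simp [h]
  · rw [getElem?_append_right (by rw [length_bAbPow]; omega), length_bAbPow,
      bAbPow_getElem? (by omega)]
    simp only [h, false_iff, Option.some_inj, decide_eq_decide]
    omega

/-- A period `p < 2i+1` of `b(ab)^i b(ab)^i` is refuted at positions `(0, p)` if `p` is odd and
at `(2i+1-p, 2i+1)` if `p` is even. -/
lemma minPeriod_bAbPow_sq (i : ℕ) : minPeriod (bAbPow i ++ bAbPow i) = 2 * i + 1 := by
  have hne : bAbPow i ≠ [] := by simp [bAbPow]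
  have hper := isPeriodOf_length_append_self hne
  rw [length_bAbPow] at hper
  refine minPeriod_eq_of_isPeriodOf hper fun p ⟨hp0, _, hpp⟩ => ?_
  by_contra! hlt
  rcases Nat.even_or_odd p with ⟨k, hk⟩ | ⟨k, hk⟩
  · have h := hpp (2 * i + 1 - p) (by simp [length_bAbPow]; omega)
    rw [Nat.sub_add_cancel hlt.le, bAbPow_sq_getElem? (by omega),
      bAbPow_sq_getElem? (by omega)] at h
    simp only [Option.some_inj, decide_eq_decide, lt_irrefl, false_iff] at h
    omega
  · have h := hpp 0 (by simp [length_bAbPow]; omega)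
    rw [zero_add, bAbPow_sq_getElem? (by omega), bAbPow_sq_getElem? (by omega)] at h
    simp only [Option.some_inj, decide_eq_decide, iff_true] at h
    omega

lemma length_abba (m : ℕ) : (abba m).length = 4 * m := by
  simp only [abba, length_append, length_flatten_replicate_pair]
  omega

lemma abba_getElem? {m j : ℕ} (hj : j < 4 * m) :
    (abba m)[j]? = some (decide (j < 2 * m ↔ j % 2 = 1)) := by
  by_cases h : j < 2 * m
  · rw [abba, getElem?_append_left (by rwa [length_flatten_replicate_pair]),
      getElem?_flatten_replicate_pair _ _ h]
    split_ifs <;> simp [h] <;> omega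
  · rw [abba, getElem?_append_right (by rw [length_flatten_replicate_pair]; omega),
      length_flatten_replicate_pair, getElem?_flatten_replicate_pair _ _ (by omega)]
    split_ifs <;> simp [h] <;> omega

lemma frag_abba {m i : ℕ} (hi : i < m) :
    frag (abba m) (2 * m - 1 - 2 * i) (2 * m + 2 * i) = bAbPow i ++ bAbPow i := by
  refine ext_getElem? fun j => ?_
  by_cases hj : j < 4 * i + 2
  · rw [frag_getElem? _ _ _ (by omega), abba_getElem? (by omega), bAbPow_sq_getElem? hj]
    simp only [Option.some_inj, decide_eq_decide]
    omega
  · rw [getElem?_eq_none (by rw [frag_length, length_abba]; omega),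
      getElem?_eq_none (by rw [length_append, length_bAbPow]; omega)]

lemma minPeriod_frag_abba {m i : ℕ} (hi : i < m) :
    minPeriod (frag (abba m) (2 * m - 1 - 2 * i) (2 * m + 2 * i)) = 2 * i + 1 := by
  rw [frag_abba hi, minPeriod_bAbPow_sq]

lemma isRun_abba {m i : ℕ} (hi : i < m) :
    IsRun (abba m) (2 * m - 1 - 2 * i) (2 * m + 2 * i) := by
  refine ⟨by omega, by rw [length_abba]; omega, by rw [minPeriod_frag_abba hi]; omega, ?_, ?_⟩
  · refine (eq_or_ne (2 * m - 1 - 2 * i) 0).imp_right fun h0 => ?_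
    rw [minPeriod_frag_abba hi, abba_getElem? (by omega), abba_getElem? (by omega)]
    simp only [ne_eq, Option.some_inj, decide_eq_decide]
    omega
  · rw [length_abba]
    refine (eq_or_ne (2 * m + 2 * i) (4 * m - 1)).imp_right fun h0 => ?_
    rw [minPeriod_frag_abba hi, abba_getElem? (by omega), abba_getElem? (by omega)]
    simp only [ne_eq, Option.some_inj, decide_eq_decide]
    omega

theorem abba_many_long_runs_general (q : ℕ) :
    ∃ N : ℕ, ∀ m : ℕ, N ≤ m →
      (∀ i : ℕ, q ≤ 2 * i + 1 → 2 * i + 1 ≤ 2 * m - 1 →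
        IsRun (abba m) (2 * m - 1 - 2 * i) (2 * m + 2 * i) ∧
        minPeriod (frag (abba m) (2 * m - 1 - 2 * i) (2 * m + 2 * i)) = 2 * i + 1 ∧
        frag (abba m) (2 * m - 1 - 2 * i) (2 * m + 2 * i) =
          (true :: (List.replicate i [false, true]).flatten) ++
          (true :: (List.replicate i [false, true]).flatten)) ∧
      (2 * m - q - 1) / 2 ≤
        {xy : ℕ × ℕ | IsRun (abba m) xy.1 xy.2 ∧
          q ≤ minPeriod (frag (abba m) xy.1 xy.2)}.ncard := by
  refine ⟨0, fun m _ => ⟨fun i _ hi => ?_, ?_⟩⟩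
  · exact ⟨isRun_abba (by omega), minPeriod_frag_abba (by omega), frag_abba (by omega)⟩
  · calc (2 * m - q - 1) / 2 ≤ (Finset.Ico (q / 2) m).card := by rw [Nat.card_Ico]; omega
      _ = (↑(Finset.Ico (q / 2) m) : Set ℕ).ncard := (Set.ncard_coe_finset _).symm
      _ ≤ _ := by
        refine Set.ncard_le_ncard_of_injOn (fun i => (2 * m - 1 - 2 * i, 2 * m + 2 * i))
          (fun i hi => ?_) (fun i _ j _ hij => by simp only [Prod.mk.injEq] at hij; omega)
          ((setOf_isRun_finite _).subset fun _ h => h.1)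
        simp only [Finset.coe_Ico, Set.mem_Ico] at hi
        exact ⟨isRun_abba hi.2, by rw [minPeriod_frag_abba hi.2]; omega⟩

/-- For every `q ≥ 3` and sufficiently large `m`, the string
`S = (ab)^m (ba)^m` (of length `n = 4m`) has, for each `i` with
`q ≤ 2i+1 ≤ 2m-1`, a run `b(ab)^i b(ab)^i` starting at position `2m-1-2i`
with period `2i+1`; hence at least `(2m - q - 1)/2` runs of period `≥ q`. -/
theorem abba_many_long_runs (q : ℕ) (hq : 3 ≤ q) :
    ∃ N : ℕ, ∀ m : ℕ, N ≤ m →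
      (∀ i : ℕ, q ≤ 2 * i + 1 → 2 * i + 1 ≤ 2 * m - 1 →
        IsRun (abba m) (2 * m - 1 - 2 * i) (2 * m + 2 * i) ∧
        minPeriod (frag (abba m) (2 * m - 1 - 2 * i) (2 * m + 2 * i)) = 2 * i + 1 ∧
        frag (abba m) (2 * m - 1 - 2 * i) (2 * m + 2 * i) =
          (true :: (List.replicate i [false, true]).flatten) ++
          (true :: (List.replicate i [false, true]).flatten)) ∧
      (2 * m - q - 1) / 2 ≤
        {xy : ℕ × ℕ | IsRun (abba m) xy.1 xy.2 ∧
          q ≤ minPeriod (frag (abba m) xy.1 xy.2)}.ncard :=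
  abba_many_long_runs_general q
end
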